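/- arXiv:2603.20972 — 3 statements merged into one kernel-verified Lean document; each statement's English description precedes it below -/
import Mathlib

section
/- For any symmetric positive definite matrix Σ ∈ ℝ^{d×d}, there exists a constant C (depending on d and Σ) such that the Gaussian k-point distortion satisfies D_k(Σ) ≤ C k^{−2/d} for all k ≥ 1; that is, the full-information gap V_∞* − V_k* = (1/2)D_k(Σ) is O(k^{−2/d}) as k → ∞. -/
open MeasureTheory ProbabilityTheory Matrix
open scoped ENNReal NNReal BigOperators Classical

/-- The standard Gaussian measure on `ℝ^d` (i.i.d. standard normal coordinates). -/
noncomputable def stdGaussian (d : ℕ) : Measure (Fin d → ℝ) :=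
  Measure.pi fun _ => gaussianReal 0 1

/-- The positive semidefinite square root of a PSD matrix (the former `Matrix.PosSemidef.sqrt`). -/
noncomputable def posSemidefSqrt {d : ℕ} {S : Matrix (Fin d) (Fin d) ℝ} (hS : S.PosSemidef) :
    Matrix (Fin d) (Fin d) ℝ :=
  (hS.1.eigenvectorUnitary : Matrix (Fin d) (Fin d) ℝ) *
    diagonal ((↑) ∘ Real.sqrt ∘ hS.1.eigenvalues) *
    (star hS.1.eigenvectorUnitary : Matrix (Fin d) (Fin d) ℝ)

/-- The multivariate Gaussian measure `N(μ, S)` on `ℝ^d`, defined as the pushforward of the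
standard Gaussian under `x ↦ μ + S^{1/2} x` (junk value `0` if `S` is not PSD). -/
noncomputable def mvGaussian {d : ℕ} (μ : Fin d → ℝ) (S : Matrix (Fin d) (Fin d) ℝ) :
    Measure (Fin d → ℝ) :=
  if hS : S.PosSemidef then (stdGaussian d).map (fun x => μ + (posSemidefSqrt hS).mulVec x) else 0

/-- Squared Euclidean distance on `ℝ^d`. -/
def sqdist {d : ℕ} (a b : Fin d → ℝ) : ℝ := ∑ i, (a i - b i) ^ 2

/-- The Gaussian `k`-point distortion
`D_k(Σ) = inf_{x₁,…,x_k} E_{ξ ~ N(0,Σ)}[min_j ‖ξ − x_j‖²]`. -/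
noncomputable def Dk {d : ℕ} (k : ℕ) (S : Matrix (Fin d) (Fin d) ℝ) : ℝ :=
  ⨅ x : Fin k → (Fin d → ℝ), ∫ ξ, (⨅ j, sqdist ξ (x j)) ∂(mvGaussian 0 S)


/-! Quantize the standard Gaussian by a product grid with `m ≈ k^{1/d}` points per axis and
push the grid forward by `Σ^{1/2}`, whose Lipschitz constant is at most its Frobenius norm.
On the line, `stretch u = u / (1 - u²)` maps `(-1, 1)` onto `ℝ`, and the images of the
`2n - 1` points `j / n`, `|j| < n`, approximate every `s` within `2 (1 + |s|)² / n`: below the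
preimage `u` of `s ≥ 0` the derivative of `stretch` is at most `2 / (1 - u²)² ≤ 2 (1 + s)²`.
The squared error `(1 + |s|)⁴ / n²` has finite Gaussian mean, so the distortion is
`O(1 / m²) = O(k^{-2/d})`. -/

noncomputable def stretch (u : ℝ) : ℝ := u / (1 - u ^ 2)

lemma stretch_neg (u : ℝ) : stretch (-u) = -stretch u := by
  simp only [stretch, neg_sq, neg_div]

lemma inv_one_sub_sq_le_one_add_stretch {u : ℝ} (hu₀ : 0 ≤ u) (hu₁ : u < 1) :
    (1 - u ^ 2)⁻¹ ≤ 1 + stretch u := by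
  have hpos : 0 < 1 - u ^ 2 := by nlinarith
  rw [stretch, inv_le_iff_one_le_mul₀ hpos, add_mul, div_mul_cancel₀ _ hpos.ne']
  nlinarith

lemma abs_stretch_sub_stretch_le {u w : ℝ} (hw : 0 ≤ w) (hwu : w ≤ u) (hu : u < 1) :
    |stretch u - stretch w| ≤ 2 * (u - w) / (1 - u ^ 2) ^ 2 := by
  have hu' : 0 < 1 - u ^ 2 := by nlinarith
  have hw' : 1 - u ^ 2 ≤ 1 - w ^ 2 := by nlinarith
  have hw'' : 0 < 1 - w ^ 2 := hu'.trans_le hw'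
  have key : stretch u - stretch w = (u - w) * (1 + u * w) / ((1 - u ^ 2) * (1 - w ^ 2)) := by
    rw [stretch, stretch, div_sub_div _ _ hu'.ne' hw''.ne']
    ring
  have hprod : 1 + u * w ≤ 2 := by nlinarith
  have hdiff : 0 ≤ u - w := by linarith
  have hden : 0 < (1 - u ^ 2) * (1 - w ^ 2) := mul_pos hu' hw''
  rw [key, abs_of_nonneg (div_nonneg (mul_nonneg hdiff (by nlinarith)) hden.le),
    div_le_div_iff₀ hden (pow_pos hu' 2)]
  calc (u - w) * (1 + u * w) * (1 - u ^ 2) ^ 2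
      ≤ (u - w) * 2 * ((1 - u ^ 2) * (1 - w ^ 2)) := by
        rw [sq]
        gcongr
    _ = 2 * (u - w) * ((1 - u ^ 2) * (1 - w ^ 2)) := by ring

lemma exists_stretch_eq {s : ℝ} (hs : 0 ≤ s) : ∃ u, 0 ≤ u ∧ u < 1 ∧ stretch u = s := by
  set r := √(1 + 4 * s ^ 2)
  have hr : r ^ 2 = 1 + 4 * s ^ 2 := Real.sq_sqrt (by positivity)
  have hr₁ : 1 ≤ r := by nlinarith [Real.sqrt_nonneg (1 + 4 * s ^ 2)]
  have hsq : 1 - (2 * s / (1 + r)) ^ 2 = 2 / (1 + r) := by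
    field_simp
    nlinarith
  refine ⟨2 * s / (1 + r), by positivity, ?_, ?_⟩
  · rw [div_lt_one (by positivity)]
    nlinarith
  · rw [stretch, hsq]
    field_simp

lemma exists_nat_lt_sq_sub_stretch_le {n : ℕ} (hn : 0 < n) {s : ℝ} (hs : 0 ≤ s) :
    ∃ j : ℕ, j < n ∧ (s - stretch (j / n)) ^ 2 ≤ (2 * (1 + s) ^ 2 / n) ^ 2 := by
  obtain ⟨u, hu₀, hu₁, rfl⟩ := exists_stretch_eq hs
  have hn' : (0 : ℝ) < n := by exact_mod_cast hn
  have hj : (⌊u * n⌋₊ : ℝ) ≤ u * n := Nat.floor_le (by positivity)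
  have hj' : u * n < ⌊u * n⌋₊ + 1 := Nat.lt_floor_add_one _
  refine ⟨⌊u * n⌋₊, (Nat.floor_lt (by positivity)).2 (by nlinarith), ?_⟩
  set w : ℝ := ⌊u * n⌋₊ / n
  have hw₀ : 0 ≤ w := by positivity
  have hwu : w ≤ u := by rwa [div_le_iff₀ hn']
  have huw : u - w ≤ 1 / n := by
    rw [sub_le_iff_le_add, ← add_div, le_div_iff₀ hn']
    linarith
  have hpos : 0 < 1 - u ^ 2 := by nlinarith
  have hinv : ((1 - u ^ 2) ^ 2)⁻¹ ≤ (1 + stretch u) ^ 2 := by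
    rw [← inv_pow]
    exact pow_le_pow_left₀ (inv_pos.2 hpos).le (inv_one_sub_sq_le_one_add_stretch hu₀ hu₁) 2
  have hlip : |stretch u - stretch w| ≤ 2 * (1 + stretch u) ^ 2 / n :=
    calc |stretch u - stretch w| ≤ 2 * (u - w) / (1 - u ^ 2) ^ 2 :=
          abs_stretch_sub_stretch_le hw₀ hwu hu₁
      _ = 2 * (u - w) * ((1 - u ^ 2) ^ 2)⁻¹ := div_eq_mul_inv _ _
      _ ≤ 2 * (1 / n) * (1 + stretch u) ^ 2 := by gcongr
      _ = 2 * (1 + stretch u) ^ 2 / n := by ring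
  rw [← sq_abs]
  exact pow_le_pow_left₀ (abs_nonneg _) hlip 2

lemma exists_int_abs_lt_sq_sub_stretch_le {n : ℕ} (hn : 0 < n) (s : ℝ) :
    ∃ j : ℤ, |j| < n ∧ (s - stretch (j / n)) ^ 2 ≤ (2 * (1 + |s|) ^ 2 / n) ^ 2 := by
  obtain ⟨j, hjn, hj⟩ := exists_nat_lt_sq_sub_stretch_le hn (abs_nonneg s)
  rcases le_total 0 s with hs | hs
  · refine ⟨j, by simpa using hjn, ?_⟩
    rwa [abs_of_nonneg hs] at hj ⊢
  · refine ⟨-j, by simpa using hjn, ?_⟩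
    rw [abs_of_nonpos hs] at hj
    rw [abs_of_nonpos hs, Int.cast_neg, neg_div, stretch_neg]
    calc (s - -stretch ((j : ℤ) / n)) ^ 2 = (-s - stretch (j / n)) ^ 2 := by push_cast; ring
      _ ≤ _ := hj

lemma exists_finset_card_le_sq_sub_le {m : ℕ} (hm : 0 < m) :
    ∃ T : Finset ℝ, T.card ≤ m ∧ ∀ s, ∃ t ∈ T, (s - t) ^ 2 ≤ 16 * (1 + |s|) ^ 4 / m ^ 2 := by
  set n := (m + 1) / 2
  have hn : 0 < n := by omega
  have hmn : (m : ℝ) ≤ 2 * n := by norm_cast; omega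
  refine ⟨(Finset.Ioo (-(n : ℤ)) n).image fun j : ℤ => stretch (j / n), ?_, fun s => ?_⟩
  · refine Finset.card_image_le.trans ?_
    simp only [Int.card_Ioo]
    omega
  · obtain ⟨j, hj, hbound⟩ := exists_int_abs_lt_sq_sub_stretch_le hn s
    refine ⟨_, Finset.mem_image_of_mem _ (Finset.mem_Ioo.2 (abs_lt.1 hj)), hbound.trans ?_⟩
    rw [div_pow, div_le_div_iff₀ (by positivity) (by positivity)]
    have : (m : ℝ) ^ 2 ≤ 4 * n ^ 2 := by nlinarith
    nlinarith [pow_nonneg (add_nonneg zero_le_one (abs_nonneg s)) 4]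

lemma sqdist_nonneg {d : ℕ} (a b : Fin d → ℝ) : 0 ≤ sqdist a b :=
  Finset.sum_nonneg fun _ _ => sq_nonneg _

lemma exists_finset_card_le_sqdist_le {m : ℕ} (hm : 0 < m) (d : ℕ) :
    ∃ G : Finset (Fin d → ℝ), G.card ≤ m ^ d ∧
      ∀ ξ, ∃ g ∈ G, sqdist ξ g ≤ 16 / m ^ 2 * ∑ i, (1 + |ξ i|) ^ 4 := by
  obtain ⟨T, hT, hTs⟩ := exists_finset_card_le_sq_sub_le hm
  refine ⟨Fintype.piFinset fun _ => T, ?_, fun ξ => ?_⟩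
  · rw [Fintype.card_piFinset_const]
    exact Nat.pow_le_pow_left hT d
  · choose t ht hbound using fun i => hTs (ξ i)
    refine ⟨t, Fintype.mem_piFinset.2 ht, ?_⟩
    rw [sqdist, Finset.mul_sum]
    exact Finset.sum_le_sum fun i _ => (hbound i).trans_eq (by ring)

lemma Finset.exists_fin_subset_range_of_card_le {α : Type*} [Inhabited α] (G : Finset α) {k : ℕ}
    (hG : G.card ≤ k) : ∃ x : Fin k → α, ↑G ⊆ Set.range x := by
  refine ⟨fun j => G.toList.getD j default, fun g hg => ?_⟩
  obtain ⟨i, hi, rfl⟩ := List.mem_iff_getElem.1 (Finset.mem_toList.2 hg)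
  exact ⟨⟨i, hi.trans_le (by simpa using hG)⟩, by simp [List.getElem?_eq_getElem hi]⟩

lemma sqdist_mulVec_le {d : ℕ} (A : Matrix (Fin d) (Fin d) ℝ) (v w : Fin d → ℝ) :
    sqdist (A *ᵥ v) (A *ᵥ w) ≤ (∑ i, ∑ j, A i j ^ 2) * sqdist v w := by
  rw [sqdist, sqdist, Finset.sum_mul]
  refine Finset.sum_le_sum fun i _ => ?_
  convert Finset.sum_mul_sq_le_sq_mul_sq Finset.univ (A i) (v - w) using 2 <;>
    simp only [Matrix.mulVec, dotProduct, Pi.sub_apply, mul_sub, Finset.sum_sub_distrib]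

lemma integrable_one_add_abs_pow_gaussianReal (μ : ℝ) (v : ℝ≥0) (p : ℕ) :
    Integrable (fun x => (1 + |x|) ^ p) (gaussianReal μ v) := by
  rcases Nat.eq_zero_or_pos p with rfl | hp
  · simp
  have h := ((memLp_const (1 : ℝ)).add
    (memLp_id_gaussianReal (μ := μ) (v := v) p).norm).integrable_norm_pow hp.ne'
  refine h.congr (ae_of_all _ fun x => ?_)
  simp [abs_of_nonneg (by positivity : (0 : ℝ) ≤ 1 + |x|)]

lemma integrable_sum_one_add_abs_pow_stdGaussian (d p : ℕ) :
    Integrable (fun ξ : Fin d → ℝ => ∑ i, (1 + |ξ i|) ^ p) (stdGaussian d) :=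
  integrable_finsetSum _ fun i _ => (measurePreserving_eval (fun _ => gaussianReal 0 1) i
    ).integrable_comp_of_integrable (integrable_one_add_abs_pow_gaussianReal 0 1 p)

lemma integral_mvGaussian {d : ℕ} (μ : Fin d → ℝ) {S : Matrix (Fin d) (Fin d) ℝ}
    (hS : S.PosSemidef) {f : (Fin d → ℝ) → ℝ} (hf : Measurable f) :
    ∫ x, f x ∂mvGaussian μ S = ∫ ξ, f (μ + posSemidefSqrt hS *ᵥ ξ) ∂stdGaussian d := by
  rw [mvGaussian, dif_pos hS, integral_map (by fun_prop) hf.aestronglyMeasurable]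

lemma Dk_le_integral {d k : ℕ} (S : Matrix (Fin d) (Fin d) ℝ) (x : Fin k → Fin d → ℝ) :
    Dk k S ≤ ∫ ξ, ⨅ j, sqdist ξ (x j) ∂mvGaussian 0 S :=
  ciInf_le ⟨0, by
    rintro _ ⟨y, rfl⟩
    exact integral_nonneg fun ξ => Real.iInf_nonneg fun j => sqdist_nonneg _ _⟩ x

lemma exists_fin_iInf_sqdist_mulVec_le {d k m : ℕ} (A : Matrix (Fin d) (Fin d) ℝ) (hm : 0 < m)
    (hmk : m ^ d ≤ k) : ∃ y : Fin k → Fin d → ℝ, ∀ ξ, ⨅ j, sqdist (A *ᵥ ξ) (A *ᵥ y j) ≤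
      16 * (∑ i, ∑ j, A i j ^ 2) / m ^ 2 * ∑ i, (1 + |ξ i|) ^ 4 := by
  obtain ⟨G, hGcard, hG⟩ := exists_finset_card_le_sqdist_le hm d
  obtain ⟨y, hy⟩ := G.exists_fin_subset_range_of_card_le (hGcard.trans hmk)
  refine ⟨y, fun ξ => ?_⟩
  obtain ⟨g, hgG, hg⟩ := hG ξ
  obtain ⟨j, rfl⟩ := hy hgG
  calc ⨅ j', sqdist (A *ᵥ ξ) (A *ᵥ y j') ≤ sqdist (A *ᵥ ξ) (A *ᵥ y j) :=
        ciInf_le ⟨0, by rintro _ ⟨j', rfl⟩; exact sqdist_nonneg _ _⟩ j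
    _ ≤ (∑ i, ∑ j, A i j ^ 2) * sqdist ξ (y j) := sqdist_mulVec_le A ξ (y j)
    _ ≤ (∑ i, ∑ j, A i j ^ 2) * (16 / m ^ 2 * ∑ i, (1 + |ξ i|) ^ 4) := by gcongr
    _ = _ := by ring

lemma exists_Dk_le_div_sq {d : ℕ} {S : Matrix (Fin d) (Fin d) ℝ} (hS : S.PosSemidef) :
    ∃ B, 0 ≤ B ∧ ∀ k m : ℕ, 0 < m → m ^ d ≤ k → Dk k S ≤ B / m ^ 2 := by
  set A := posSemidefSqrt hS
  set W := ∫ ξ, ∑ i, (1 + |ξ i|) ^ 4 ∂stdGaussian d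
  refine ⟨16 * (∑ i, ∑ j, A i j ^ 2) * W, by positivity, fun k m hm hmk => ?_⟩
  obtain ⟨y, hy⟩ := exists_fin_iInf_sqdist_mulVec_le A hm hmk
  have hmeas : Measurable fun ξ => ⨅ j, sqdist ξ (A *ᵥ y j) :=
    Measurable.iInf fun j => by unfold sqdist; fun_prop
  calc Dk k S ≤ ∫ ξ, ⨅ j, sqdist ξ (A *ᵥ y j) ∂mvGaussian 0 S := Dk_le_integral S _
    _ = ∫ ξ, ⨅ j, sqdist (A *ᵥ ξ) (A *ᵥ y j) ∂stdGaussian d := by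
        rw [integral_mvGaussian 0 hS hmeas]
        simp only [zero_add, A]
    _ ≤ ∫ ξ, 16 * (∑ i, ∑ j, A i j ^ 2) / m ^ 2 * ∑ i, (1 + |ξ i|) ^ 4 ∂stdGaussian d :=
        integral_mono_of_nonneg (ae_of_all _ fun ξ => Real.iInf_nonneg fun j => sqdist_nonneg _ _)
          ((integrable_sum_one_add_abs_pow_stdGaussian d 4).const_mul _) (ae_of_all _ hy)
    _ = 16 * (∑ i, ∑ j, A i j ^ 2) * W / m ^ 2 := by
        rw [integral_const_mul]
        ring

lemma exists_pow_le_inv_sq_le {k : ℕ} (hk : 1 ≤ k) (d : ℕ) :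
    ∃ m : ℕ, 0 < m ∧ m ^ d ≤ k ∧ ((m : ℝ) ^ 2)⁻¹ ≤ 4 * (k : ℝ) ^ (-(2 : ℝ) / d) := by
  have hk' : (1 : ℝ) ≤ k := by exact_mod_cast hk
  set t := (k : ℝ) ^ ((d : ℝ)⁻¹)
  have ht : 1 ≤ t := Real.one_le_rpow hk' (by positivity)
  refine ⟨⌊t⌋₊, Nat.floor_pos.2 ht, ?_, ?_⟩
  · have hexp : (d : ℝ)⁻¹ * d ≤ 1 := by
      rcases eq_or_ne (d : ℝ) 0 with h | h <;> simp [h]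
    have : (⌊t⌋₊ : ℝ) ^ d ≤ k :=
      calc (⌊t⌋₊ : ℝ) ^ d ≤ t ^ d := by gcongr; exact Nat.floor_le (by positivity)
        _ = (k : ℝ) ^ ((d : ℝ)⁻¹ * d) := by rw [Real.rpow_mul_natCast (Nat.cast_nonneg k)]
        _ ≤ (k : ℝ) ^ (1 : ℝ) := Real.rpow_le_rpow_of_exponent_le hk' hexp
        _ = k := Real.rpow_one _
    exact_mod_cast this
  · have hm : (1 : ℝ) ≤ ⌊t⌋₊ := by exact_mod_cast Nat.floor_pos.2 ht
    have htm : t ≤ 2 * ⌊t⌋₊ := by linarith [Nat.lt_floor_add_one t]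
    have hrpow : (k : ℝ) ^ (-(2 : ℝ) / d) = (t ^ 2)⁻¹ := by
      rw [show -(2 : ℝ) / d = (d : ℝ)⁻¹ * -2 by ring, Real.rpow_mul (by positivity),
        Real.rpow_neg (by positivity), Real.rpow_two]
    calc ((⌊t⌋₊ : ℝ) ^ 2)⁻¹ = 4 * ((2 * ⌊t⌋₊ : ℝ) ^ 2)⁻¹ := by field_simp; ring
      _ ≤ 4 * (k : ℝ) ^ (-(2 : ℝ) / d) := by rw [hrpow]; gcongr

theorem statement10_general {d : ℕ} (S : Matrix (Fin d) (Fin d) ℝ) (hS : S.PosDef) :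
    ∃ C : ℝ, ∀ k : ℕ, 1 ≤ k → Dk k S ≤ C * (k : ℝ) ^ (-(2 : ℝ) / d) := by
  obtain ⟨B, hB, hDk⟩ := exists_Dk_le_div_sq hS.posSemidef
  refine ⟨4 * B, fun k hk => ?_⟩
  obtain ⟨m, hm, hmk, hinv⟩ := exists_pow_le_inv_sq_le hk d
  calc Dk k S ≤ B * ((m : ℝ) ^ 2)⁻¹ := (hDk k m hm hmk).trans_eq (div_eq_mul_inv _ _)
    _ ≤ B * (4 * (k : ℝ) ^ (-(2 : ℝ) / d)) := by gcongr
    _ = 4 * B * (k : ℝ) ^ (-(2 : ℝ) / d) := by ring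

/-- **Rate of the value of assortment breadth.**
For positive definite `Σ` there exists a constant `C` with
`D_k(Σ) ≤ C k^{−2/d}` for all `k ≥ 1`; i.e. `V_∞* − V_k* = (1/2)D_k(Σ) = O(k^{−2/d})`. -/
theorem statement10 {d : ℕ} (hd : 0 < d) (S : Matrix (Fin d) (Fin d) ℝ) (hS : S.PosDef) :
    ∃ C : ℝ, ∀ k : ℕ, 1 ≤ k → Dk k S ≤ C * (k : ℝ) ^ (-(2 : ℝ) / d) :=
  statement10_general S hS
end

section
/- For a symmetric positive definite matrix Σ ∈ ℝ^{d×d} and σ² > 0, define the single-question utility gain Δ(y) = (1/2) · (yᵀ Σ² y)/(σ² + yᵀ Σ y) for unit vectors y ∈ ℝ^d. Then Δ(y) = (1/2)(tr(Σ) − tr(Σ')), where Σ' = Σ − (Σ y yᵀ Σ)/(σ² + yᵀ Σ y) is the Kalman-updated covariance, and Δ(y) is maximized over unit vectors exactly by the unit eigenvectors of Σ associated with its largest eigenvalue. -/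
open Matrix
open scoped BigOperators

/-!
Write `b = yᵀΣy` and `a = yᵀΣ²y`. Cyclicity of the trace turns `tr Σ - tr Σ'` into
`a / (σ² + b)`. If `λ` is the top eigenvalue then `0 ≤ Σ ≤ λ` in the Loewner order, and since `Σ`
commutes with `λ - Σ` also `Σ² ≤ λΣ`. For a unit `y` this gives `b ≤ λ` and `a ≤ λb`, whence
`a / (σ² + b) ≤ λb / (σ² + b) ≤ λ² / (σ² + λ)`, the value at a top eigenvector. Equality forces
`b = λ`, i.e. `yᵀ(λ - Σ)y = 0`, and positivity of `λ - Σ` then gives `(λ - Σ)y = 0`.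
-/

open scoped MatrixOrder

theorem div_add_le_sq_div_add {a b l σ : ℝ} (hσ : 0 < σ) (hb : 0 ≤ b) (hbl : b ≤ l)
    (hab : a ≤ l * b) : a / (σ + b) ≤ l ^ 2 / (σ + l) := by
  rw [div_le_div_iff₀ (by linarith) (by linarith)]
  nlinarith [mul_le_mul_of_nonneg_right hab (by linarith : 0 ≤ σ + l),
    mul_nonneg (mul_nonneg (hb.trans hbl) (sub_nonneg.mpr hbl)) hσ.le]

theorem eq_of_sq_div_add_le_div_add {a b l σ : ℝ} (hσ : 0 < σ) (hb : 0 ≤ b) (hbl : b ≤ l)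
    (hab : a ≤ l * b) (h : l ^ 2 / (σ + l) ≤ a / (σ + b)) : b = l := by
  rw [div_le_div_iff₀ (by linarith) (by linarith)] at h
  by_contra hne
  have hlt : b < l := lt_of_le_of_ne hbl hne
  nlinarith [mul_le_mul_of_nonneg_right hab (by linarith : 0 ≤ σ + l),
    mul_pos (mul_pos (hb.trans_lt hlt) (sub_pos.mpr hlt)) hσ]

namespace Matrix

variable {n : Type*} [Fintype n] [DecidableEq n]

omit [DecidableEq n] in
noncomputable def kalmanUpdate (S : Matrix n n ℝ) (σ2 : ℝ) (y : n → ℝ) : Matrix n n ℝ :=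
  S - (σ2 + y ⬝ᵥ S *ᵥ y)⁻¹ • (S * vecMulVec y y * S)

noncomputable def varianceReduction (S : Matrix n n ℝ) (σ2 : ℝ) (y : n → ℝ) : ℝ :=
  y ⬝ᵥ (S ^ 2) *ᵥ y / (σ2 + y ⬝ᵥ S *ᵥ y)

theorem trace_mul_vecMulVec_self_mul {R : Type*} [CommSemiring R] (S : Matrix n n R)
    (y : n → R) : (S * vecMulVec y y * S).trace = y ⬝ᵥ (S ^ 2) *ᵥ y := by
  rw [mul_vecMulVec, vecMulVec_mul, trace_vecMulVec, dotProduct_comm, ← dotProduct_mulVec,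
    mulVec_mulVec, sq]

theorem trace_sub_trace_kalmanUpdate (S : Matrix n n ℝ) (σ2 : ℝ) (y : n → ℝ) :
    S.trace - (kalmanUpdate S σ2 y).trace = varianceReduction S σ2 y := by
  rw [kalmanUpdate, trace_sub, trace_smul, trace_mul_vecMulVec_self_mul, smul_eq_mul,
    varianceReduction, sub_sub_cancel, inv_mul_eq_div]

theorem exists_mulVec_eq_smul_of_mem_spectrum {S : Matrix n n ℝ} {μ : ℝ}
    (hμ : μ ∈ spectrum ℝ S) : ∃ w, w ≠ 0 ∧ S *ᵥ w = μ • w := by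
  rw [← spectrum_toLin', ← Module.End.hasEigenvalue_iff_mem_spectrum] at hμ
  obtain ⟨w, hw⟩ := hμ.exists_hasEigenvector
  exact ⟨w, hw.2, by simpa using hw.apply_eq_smul⟩

theorem le_smul_one_of_forall_eigenvalue_le {S : Matrix n n ℝ} (hS : S.IsHermitian) {l : ℝ}
    (h : ∀ (μ : ℝ) (w : n → ℝ), w ≠ 0 → S *ᵥ w = μ • w → μ ≤ l) : S ≤ l • 1 := by
  rw [← Algebra.algebraMap_eq_smul_one]
  refine le_algebraMap_of_spectrum_le (fun μ hμ => ?_) hS.isSelfAdjoint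
  obtain ⟨w, hw, hSw⟩ := exists_mulVec_eq_smul_of_mem_spectrum hμ
  exact h μ w hw hSw

theorem sq_le_smul_of_nonneg_of_le_smul_one {S : Matrix n n ℝ} {l : ℝ} (hS : 0 ≤ S)
    (hl : S ≤ l • 1) : S ^ 2 ≤ l • S := by
  have hcomm : Commute S (l • 1 - S) :=
    ((Commute.one_right S).smul_right l).sub_right (Commute.refl S)
  have key : 0 ≤ S * (l • 1 - S) :=
    hcomm.mul_nonneg hS (sub_nonneg.mpr hl)
  rw [mul_sub, mul_smul_comm, mul_one, ← sq] at key
  exact sub_nonneg.mp key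

omit [DecidableEq n] in
theorem dotProduct_mulVec_le_dotProduct_mulVec {A B : Matrix n n ℝ} (h : A ≤ B) (y : n → ℝ) :
    y ⬝ᵥ A *ᵥ y ≤ y ⬝ᵥ B *ᵥ y := by
  have := (le_iff.mp h).dotProduct_mulVec_nonneg y
  rw [star_trivial, sub_mulVec, dotProduct_sub] at this
  linarith

variable {S : Matrix n n ℝ} {σ2 l : ℝ} {y : n → ℝ}

theorem dotProduct_mulVec_bounds (hS : 0 ≤ S) (hl : S ≤ l • 1) (hy : y ⬝ᵥ y = 1) :
    0 ≤ y ⬝ᵥ S *ᵥ y ∧ y ⬝ᵥ S *ᵥ y ≤ l ∧ y ⬝ᵥ (S ^ 2) *ᵥ y ≤ l * (y ⬝ᵥ S *ᵥ y) := by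
  refine ⟨?_, ?_, ?_⟩
  · simpa using dotProduct_mulVec_le_dotProduct_mulVec hS y
  · simpa [smul_mulVec, hy] using dotProduct_mulVec_le_dotProduct_mulVec hl y
  · simpa [smul_mulVec] using
      dotProduct_mulVec_le_dotProduct_mulVec (sq_le_smul_of_nonneg_of_le_smul_one hS hl) y

theorem varianceReduction_of_mulVec_eq_smul (hy : y ⬝ᵥ y = 1) (h : S *ᵥ y = l • y) :
    varianceReduction S σ2 y = l ^ 2 / (σ2 + l) := by
  simp [varianceReduction, sq, ← mulVec_mulVec, mulVec_smul, h, hy]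

theorem varianceReduction_le (hS : 0 ≤ S) (hl : S ≤ l • 1) (hσ : 0 < σ2) (hy : y ⬝ᵥ y = 1) :
    varianceReduction S σ2 y ≤ l ^ 2 / (σ2 + l) :=
  have ⟨hb, hbl, hab⟩ := dotProduct_mulVec_bounds hS hl hy
  div_add_le_sq_div_add hσ hb hbl hab

theorem mulVec_eq_smul_of_le_varianceReduction (hS : 0 ≤ S) (hl : S ≤ l • 1) (hσ : 0 < σ2)
    (hy : y ⬝ᵥ y = 1) (h : l ^ 2 / (σ2 + l) ≤ varianceReduction S σ2 y) : S *ᵥ y = l • y := by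
  obtain ⟨hb, hbl, hab⟩ := dotProduct_mulVec_bounds hS hl hy
  have hbeq : y ⬝ᵥ S *ᵥ y = l := eq_of_sq_div_add_le_div_add hσ hb hbl hab h
  have hzero : star y ⬝ᵥ (l • 1 - S) *ᵥ y = 0 := by
    simp [sub_mulVec, smul_mulVec, hy, hbeq]
  rw [(le_iff.mp hl).dotProduct_mulVec_zero_iff, sub_mulVec, sub_eq_zero] at hzero
  simpa [smul_mulVec] using hzero.symm

end Matrix

/-- **Per-round solicitation gain and optimal direction.**
For positive definite `Σ` and `σ² > 0`, the single-question gain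
`Δ(y) = (1/2)(yᵀΣ²y)/(σ² + yᵀΣy)` equals `(1/2)(tr Σ − tr Σ')` where `Σ'` is the
Kalman-updated covariance, and `Δ` is maximized over unit vectors exactly by the unit
eigenvectors of `Σ` associated with its largest eigenvalue. -/
theorem statement11 {d : ℕ} (S : Matrix (Fin d) (Fin d) ℝ) (hS : S.PosDef)
    (σ2 : ℝ) (hσ : 0 < σ2)
    (Δ : (Fin d → ℝ) → ℝ)
    (hΔ : ∀ y, Δ y = (1/2) * (y ⬝ᵥ (S ^ 2).mulVec y) / (σ2 + y ⬝ᵥ S.mulVec y))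
    (lamMax : ℝ) (u : Fin d → ℝ) (hu : ∑ i, u i ^ 2 = 1)
    (hEig : S.mulVec u = lamMax • u)
    (hTop : ∀ (lam : ℝ) (w : Fin d → ℝ), w ≠ 0 → S.mulVec w = lam • w → lam ≤ lamMax) :
    (∀ y : Fin d → ℝ, (∑ i, y i ^ 2 = 1) →
        Δ y = (1/2) *
          (S.trace - (S - (σ2 + y ⬝ᵥ S.mulVec y)⁻¹ • (S * vecMulVec y y * S)).trace)) ∧
    (∀ y : Fin d → ℝ, (∑ i, y i ^ 2 = 1) →
      ((∀ w : Fin d → ℝ, (∑ i, w i ^ 2 = 1) → Δ w ≤ Δ y) ↔ S.mulVec y = lamMax • y)) := by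
  have hΔ' (y : Fin d → ℝ) : Δ y = 1 / 2 * varianceReduction S σ2 y := by
    rw [hΔ, varianceReduction, mul_div_assoc]
  have hunit {y : Fin d → ℝ} (hy : ∑ i, y i ^ 2 = 1) : y ⬝ᵥ y = 1 := by
    simpa [dotProduct, sq] using hy
  have hS0 : 0 ≤ S := hS.posSemidef.nonneg
  have hl : S ≤ lamMax • 1 := le_smul_one_of_forall_eigenvalue_le hS.isHermitian hTop
  refine ⟨fun y _ => ?_, fun y hy => ⟨fun hmax => ?_, fun hyEig w hw => ?_⟩⟩
  · rw [hΔ', ← trace_sub_trace_kalmanUpdate]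
    rfl
  · have hu_le := hmax u hu
    rw [hΔ', hΔ', varianceReduction_of_mulVec_eq_smul (hunit hu) hEig] at hu_le
    exact mulVec_eq_smul_of_le_varianceReduction hS0 hl hσ (hunit hy) (by linarith)
  · rw [hΔ', hΔ', varianceReduction_of_mulVec_eq_smul (hunit hy) hyEig]
    linarith [varianceReduction_le (y := w) hS0 hl hσ (hunit hw)]
end

section
/- Let Σ₀ ∈ ℝ^{d×d} be symmetric positive definite and σ² > 0. For any unit vectors y₁,…,y_m ∈ ℝ^d, the posterior covariance Σ_m = (Σ₀^{-1} + σ^{-2} Σ_{t=1}^m y_t y_tᵀ)^{-1} satisfies tr(Σ_m^{-1}) = tr(Σ₀^{-1}) + m/σ², and hence tr(Σ_m) ≥ d² / (tr(Σ₀^{-1}) + m/σ²). Consequently, for any ε > 0, achieving (1/2)tr(Σ_m) ≤ ε under any solicitation policy requires m ≥ σ² · max{0, d²/(2ε) − tr(Σ₀^{-1})}. -/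
open Matrix

/-!
Each unit query adds `σ⁻² y yᵀ`, of trace `σ⁻² ‖y‖² = σ⁻²`, to the precision matrix, so the
trace of the precision grows by exactly `m / σ²`. Cauchy–Schwarz on the eigenvalues `μᵢ > 0` of a
positive definite matrix gives `d² = (∑ √μᵢ · √μᵢ⁻¹)² ≤ tr(A) · tr(A⁻¹)`, which turns this into a
lower bound on `tr(Σ_m)`; the budget bound is that inequality solved for `m`.
-/

namespace Matrix

variable {n : Type*} [Fintype n] [DecidableEq n]

lemma trace_conjStarAlgAut {R : Type*} [CommRing R] [StarRing R]
    (u : unitary (Matrix n n R)) (X : Matrix n n R) :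
    (Unitary.conjStarAlgAut R _ u X).trace = X.trace := by
  rw [Unitary.conjStarAlgAut_apply, trace_mul_cycle, Unitary.coe_star_mul_self, one_mul]

open scoped ComplexOrder in
lemma PosDef.trace_inv_eq_sum_inv_eigenvalues {𝕜 : Type*} [RCLike 𝕜] {A : Matrix n n 𝕜}
    (hA : A.PosDef) : A⁻¹.trace = ∑ i, ((hA.1.eigenvalues i)⁻¹ : 𝕜) := by
  set conj := Unitary.conjStarAlgAut 𝕜 _ hA.1.eigenvectorUnitary
  have hinv : A⁻¹ = conj (diagonal fun i ↦ ((hA.1.eigenvalues i)⁻¹ : 𝕜)) := by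
    have hspec : A = conj (diagonal (RCLike.ofReal ∘ hA.1.eigenvalues)) := hA.1.spectral_theorem
    refine inv_eq_right_inv ?_
    nth_rw 1 [hspec]
    rw [← map_mul, diagonal_mul_diagonal, ← map_one conj, ← diagonal_one]
    congr 2
    ext i
    simp [(hA.eigenvalues_pos i).ne']
  rw [hinv, trace_conjStarAlgAut, trace_diagonal]

lemma PosDef.sq_card_le_trace_mul_trace_inv {A : Matrix n n ℝ} (hA : A.PosDef) :
    (Fintype.card n : ℝ) ^ 2 ≤ A.trace * A⁻¹.trace := by
  set μ := hA.1.eigenvalues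
  have hμ : ∀ i, 0 < μ i := hA.eigenvalues_pos
  rw [hA.trace_inv_eq_sum_inv_eigenvalues, hA.1.trace_eq_sum_eigenvalues]
  simpa using Finset.sum_sq_le_sum_mul_sum_of_sq_le_mul Finset.univ (r := fun _ ↦ 1)
    (fun i _ ↦ (hμ i).le) (fun i _ ↦ (inv_pos.2 (hμ i)).le)
    (fun i _ ↦ by simp [mul_inv_cancel₀ (hμ i).ne'])

end Matrix

/-- **Precision budget and solicitation lower bound.**
For the posterior `Σ_m = (Σ₀⁻¹ + σ⁻² ∑_t y_t y_tᵀ)⁻¹` generated by unit queries,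
`tr(Σ_m⁻¹) = tr(Σ₀⁻¹) + m/σ²`, hence `tr(Σ_m) ≥ d²/(tr(Σ₀⁻¹) + m/σ²)`; consequently
`(1/2) tr(Σ_m) ≤ ε` forces `m ≥ σ²·max{0, d²/(2ε) − tr(Σ₀⁻¹)}`. -/
theorem statement17 {d m : ℕ} (S0 : Matrix (Fin d) (Fin d) ℝ) (hS0 : S0.PosDef)
    (σ2 : ℝ) (hσ : 0 < σ2)
    (y : Fin m → (Fin d → ℝ)) (hy : ∀ t, ∑ i, y t i ^ 2 = 1)
    (Sm : Matrix (Fin d) (Fin d) ℝ)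
    (hSm : Sm = (S0⁻¹ + σ2⁻¹ • ∑ t, vecMulVec (y t) (y t))⁻¹) :
    Sm⁻¹.trace = S0⁻¹.trace + m / σ2 ∧
    (d : ℝ) ^ 2 / (S0⁻¹.trace + m / σ2) ≤ Sm.trace ∧
    (∀ ε : ℝ, 0 < ε → (1/2) * Sm.trace ≤ ε →
      σ2 * max 0 ((d : ℝ) ^ 2 / (2 * ε) - S0⁻¹.trace) ≤ (m : ℝ)) := by
  set Λ := S0⁻¹ + σ2⁻¹ • ∑ t, vecMulVec (y t) (y t)
  have hΛ : Λ.PosDef := hS0.inv.add_posSemidef <|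
    (posSemidef_sum _ fun t _ ↦ by simpa using posSemidef_vecMulVec_self_star (y t)).smul
      (inv_nonneg.2 hσ.le)
  have htrΛ : Λ.trace = S0⁻¹.trace + m / σ2 := by
    simp [Λ, trace_sum, dotProduct, ← sq, hy, div_eq_inv_mul]
  have hinv : Sm⁻¹ = Λ := by
    rw [hSm, nonsing_inv_nonsing_inv _ ((isUnit_iff_isUnit_det _).1 hΛ.isUnit)]
  have hcs : (d : ℝ) ^ 2 ≤ Sm.trace * Λ.trace := by
    simpa [hSm, mul_comm] using hΛ.sq_card_le_trace_mul_trace_inv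
  have hΛ0 : 0 ≤ Λ.trace := hΛ.posSemidef.trace_nonneg
  have hSm0 : 0 ≤ Sm.trace := hSm ▸ hΛ.inv.posSemidef.trace_nonneg
  refine ⟨hinv ▸ htrΛ, htrΛ ▸ div_le_of_le_mul₀ hΛ0 hSm0 hcs, fun ε hε hSmε ↦ ?_⟩
  have hbudget : (d : ℝ) ^ 2 / (2 * ε) ≤ S0⁻¹.trace + m / σ2 := by
    rw [div_le_iff₀ (by positivity), ← htrΛ]
    nlinarith
  calc σ2 * max 0 ((d : ℝ) ^ 2 / (2 * ε) - S0⁻¹.trace) ≤ σ2 * (m / σ2) := by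
        gcongr
        exact max_le (by positivity) (by linarith)
    _ = m := mul_div_cancel₀ _ hσ.ne'
end
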